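/- arXiv:2405.00369 — 6 statements merged into one kernel-verified Lean document; each statement's English description precedes it below -/
import Mathlib

section
/- Let 0 < a < 1 and δ > 0. For every ε > 0 there exists ε₁ > 1 such that for all t, x_n with 0 < t < 1/4, 0 < x_n < 1/4 and ε₁ √t < x_n, one has t^{-1/2} · exp(-δ x_n²/t) · t^{-a} ≤ ε · x_n · a · (x_n²)^{-a-1}. -/
/-!
Put `s = x² / t`. Then `t^(-1/2) e^(-δx²/t) t^(-a) = s^(a+1/2) e^(-δs) · x (x²)^(-a-1)`: the powers
of `t` are exactly absorbed, so the estimate reduces to `s^(a+1/2) e^(-δs) ≤ εa`, which holds for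
all large `s` because exponential decay beats every power. The hypothesis `ε₁ √t < x` says
`s > ε₁²`, so it suffices to take `ε₁` large.
-/

open Real

open Filter in
lemma exists_forall_ge_rpow_mul_exp_neg_mul_le (b : ℝ) {δ c : ℝ} (hδ : 0 < δ) (hc : 0 < c) :
    ∃ S, ∀ s ≥ S, s ^ b * exp (-δ * s) ≤ c :=
  eventually_atTop.1 <|
    (tendsto_rpow_mul_exp_neg_mul_atTop_nhds_zero b δ hδ).eventually (ge_mem_nhds hc)

lemma rpow_mul_exp_mul_rpow_eq_of_pos {t x : ℝ} (ht : 0 < t) (hx : 0 < x) (a δ : ℝ) :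
    t ^ (-(1:ℝ)/2) * exp (-δ * x ^ 2 / t) * t ^ (-a) =
      (x ^ 2 / t) ^ (a + 1/2) * exp (-δ * (x ^ 2 / t)) * (x * (x ^ 2) ^ (-a - 1)) := by
  have hx_sq_rpow : ∀ p : ℝ, (x ^ 2) ^ p = x ^ (2 * p) := fun p => by
    rw [← rpow_natCast, ← rpow_mul hx.le]; norm_num
  have hx_cancel : x ^ (2 * (a + 1/2)) * (x * x ^ (2 * (-a - 1))) = 1 := by
    nth_rewrite 2 [← rpow_one x]
    rw [← rpow_add hx, ← rpow_add hx]
    ring_nf; exact rpow_zero x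
  have ht_combine : t ^ (-(1:ℝ)/2) * t ^ (-a) = (t ^ (a + 1/2))⁻¹ := by
    rw [← rpow_add ht, ← rpow_neg ht.le]; ring_nf
  rw [div_rpow (by positivity) ht.le, hx_sq_rpow, hx_sq_rpow, mul_div_assoc]
  linear_combination exp (-δ * (x ^ 2 / t)) * ht_combine -
    exp (-δ * (x ^ 2 / t)) / t ^ (a + 1/2) * hx_cancel

theorem stmt_1_general (a δ : ℝ) (ha0 : 0 < a) (hδ : 0 < δ) :
    ∀ ε : ℝ, 0 < ε → ∃ ε₁ : ℝ, 1 < ε₁ ∧ ∀ t xn : ℝ, 0 < t → t < 1/4 →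
      0 < xn → xn < 1/4 → ε₁ * Real.sqrt t < xn →
      t ^ (-(1:ℝ)/2) * Real.exp (-δ * xn ^ 2 / t) * t ^ (-a) ≤
        ε * xn * a * (xn ^ 2) ^ (-a - 1) := by
  intro ε hε
  obtain ⟨S, hS⟩ := exists_forall_ge_rpow_mul_exp_neg_mul_le (a + 1/2) hδ (mul_pos hε ha0)
  refine ⟨max 2 S, one_lt_two.trans_le (le_max_left _ _), fun t xn ht _ hxn _ hlt => ?_⟩
  have hε₁ : 1 ≤ max 2 S := one_le_two.trans (le_max_left _ _)
  have hS_le : S ≤ xn ^ 2 / t := by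
    rw [le_div_iff₀ ht]
    calc S * t ≤ (max 2 S * sqrt t) ^ 2 := by
          rw [mul_pow, sq_sqrt ht.le]
          gcongr
          exact (le_max_right _ _).trans (le_self_pow₀ hε₁ two_ne_zero)
      _ ≤ xn ^ 2 := by gcongr
  rw [rpow_mul_exp_mul_rpow_eq_of_pos ht hxn, show ε * xn * a * (xn ^ 2) ^ (-a - 1) =
    ε * a * (xn * (xn ^ 2) ^ (-a - 1)) by ring]
  exact mul_le_mul_of_nonneg_right (hS _ hS_le) (by positivity)

theorem stmt_1 (a δ : ℝ) (ha0 : 0 < a) (ha1 : a < 1) (hδ : 0 < δ) :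
    ∀ ε : ℝ, 0 < ε → ∃ ε₁ : ℝ, 1 < ε₁ ∧ ∀ t xn : ℝ, 0 < t → t < 1/4 →
      0 < xn → xn < 1/4 → ε₁ * Real.sqrt t < xn →
      t ^ (-(1:ℝ)/2) * Real.exp (-δ * xn ^ 2 / t) * t ^ (-a) ≤
        ε * xn * a * (xn ^ 2) ^ (-a - 1) :=
  stmt_1_general a δ ha0 hδ
end

section
/- Let 0 < a < 1, α > 0 with α ≠ 1 and α + a ≠ 1, and 1 < t < 5/4. Define Ψ(t) = ∫_0^1 (t-s)^{-α} (1-s)^{-a} ds. Then there exists a constant c > 1 depending only on a, α such that: if α + a > 1, then c^{-1}(t-1)^{1-α-a} ≤ Ψ(t) ≤ c(t-1)^{1-α-a}; and if α + a < 1, then c^{-1} ≤ Ψ(t) ≤ c. -/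
/-!
Substituting `u = 1 - s` and writing `ε = t - 1` turns `Ψ(t)` into
`∫₀¹ (ε + u)^(-α) u^(-a) du`. On `[0, ε]` the factor `(ε + u)^(-α)` lies between `(2ε)^(-α)`
and `ε^(-α)`, so this piece is comparable to `ε^(1-α-a)`. On `[ε, 1]` the integrand is at most
`u^(-α-a)`, whose integral is `O(ε^(1-α-a))` when `α + a > 1`; when `α + a < 1` the bound
`u^(-α-a)` is integrable on all of `[0, 1]`, and `(ε + u)^(-α) ≥ 2^(-α)`, `u^(-a) ≥ 1` give a
constant lower bound.
-/

open Real intervalIntegral MeasureTheory Set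

lemma integral_rpow_neg {p x y : ℝ} (hp : p ≠ 1) (h : p < 1 ∨ (0:ℝ) ∉ uIcc x y) :
    ∫ u in x..y, u ^ (-p) = (y ^ (1 - p) - x ^ (1 - p)) / (1 - p) := by
  rw [integral_rpow, neg_add_eq_sub]
  rcases h with h | h
  · exact Or.inl (by linarith)
  · exact Or.inr ⟨fun h' => hp (by linarith), h⟩

lemma integral_rpow_neg_from_zero {a x : ℝ} (ha : a < 1) :
    ∫ u in (0:ℝ)..x, u ^ (-a) = x ^ (1 - a) / (1 - a) := by
  rw [integral_rpow_neg ha.ne (Or.inl ha), zero_rpow (by linarith), sub_zero]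

lemma integral_sub_rpow_mul_one_sub_rpow_eq (t α a : ℝ) :
    ∫ s in (0:ℝ)..1, (t - s) ^ (-α) * (1 - s) ^ (-a) =
      ∫ u in (0:ℝ)..1, (t - 1 + u) ^ (-α) * u ^ (-a) := by
  simpa using integral_comp_sub_left (fun u => (t - 1 + u) ^ (-α) * u ^ (-a)) (a := 0) (b := 1) 1

section ShiftedKernel

variable {ε α a : ℝ}

lemma intervalIntegrable_add_rpow_mul_rpow (hε : 0 < ε) (ha : a < 1) {x y : ℝ}
    (hx : 0 ≤ x) (hy : 0 ≤ y) :
    IntervalIntegrable (fun u => (ε + u) ^ (-α) * u ^ (-a)) volume x y := by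
  refine (intervalIntegrable_rpow' (by linarith)).continuousOn_mul ?_
  refine ContinuousOn.rpow_const (by fun_prop) fun u hu => Or.inl ?_
  linarith [(le_inf hx hy).trans hu.1]

lemma add_rpow_mul_rpow_nonneg (hε : 0 ≤ ε) {u : ℝ} (hu : 0 ≤ u) :
    0 ≤ (ε + u) ^ (-α) * u ^ (-a) := by
  have : 0 ≤ ε + u := by linarith
  positivity

lemma add_rpow_mul_rpow_le_rpow (hε : 0 ≤ ε) (hα : 0 ≤ α) {u : ℝ} (hu : 0 < u) :
    (ε + u) ^ (-α) * u ^ (-a) ≤ u ^ (-(α + a)) := by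
  rw [neg_add, rpow_add hu]
  exact mul_le_mul_of_nonneg_right
    (rpow_le_rpow_of_nonpos hu (by linarith) (by linarith)) (rpow_nonneg hu.le _)

lemma integral_zero_to_self_le (hε : 0 < ε) (hα : 0 ≤ α) (ha : a < 1) :
    ∫ u in (0:ℝ)..ε, (ε + u) ^ (-α) * u ^ (-a) ≤ ε ^ (1 - α - a) / (1 - a) := by
  calc ∫ u in (0:ℝ)..ε, (ε + u) ^ (-α) * u ^ (-a)
      ≤ ∫ u in (0:ℝ)..ε, ε ^ (-α) * u ^ (-a) := by
        refine integral_mono_on_of_le_Ioo hε.le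
          (intervalIntegrable_add_rpow_mul_rpow hε ha le_rfl hε.le)
          ((intervalIntegrable_rpow' (by linarith)).const_mul _) fun u hu => ?_
        exact mul_le_mul_of_nonneg_right
          (rpow_le_rpow_of_nonpos hε (by linarith [hu.1]) (by linarith)) (rpow_nonneg hu.1.le _)
    _ = ε ^ (1 - α - a) / (1 - a) := by
        rw [intervalIntegral.integral_const_mul, integral_rpow_neg_from_zero ha,
          show 1 - α - a = -α + (1 - a) by ring, rpow_add hε]
        ring

lemma le_integral_zero_to_self (hε : 0 < ε) (hα : 0 ≤ α) (ha : a < 1) :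
    2 ^ (-α) / (1 - a) * ε ^ (1 - α - a) ≤ ∫ u in (0:ℝ)..ε, (ε + u) ^ (-α) * u ^ (-a) := by
  calc 2 ^ (-α) / (1 - a) * ε ^ (1 - α - a)
      = ∫ u in (0:ℝ)..ε, (2 * ε) ^ (-α) * u ^ (-a) := by
        rw [intervalIntegral.integral_const_mul, integral_rpow_neg_from_zero ha,
          mul_rpow zero_le_two hε.le, show 1 - α - a = -α + (1 - a) by ring, rpow_add hε]
        ring
    _ ≤ ∫ u in (0:ℝ)..ε, (ε + u) ^ (-α) * u ^ (-a) := by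
        refine integral_mono_on_of_le_Ioo hε.le
          ((intervalIntegrable_rpow' (by linarith)).const_mul _)
          (intervalIntegrable_add_rpow_mul_rpow hε ha le_rfl hε.le) fun u hu => ?_
        exact mul_le_mul_of_nonneg_right
          (rpow_le_rpow_of_nonpos (by linarith [hu.1]) (by linarith [hu.2]) (by linarith))
          (rpow_nonneg hu.1.le _)

lemma integral_self_to_one_le (hε : 0 < ε) (hε1 : ε ≤ 1) (hα : 0 ≤ α) (ha : a < 1)
    (h : 1 < α + a) :
    ∫ u in ε..1, (ε + u) ^ (-α) * u ^ (-a) ≤ ε ^ (1 - α - a) / (α + a - 1) := by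
  have h0 : (0:ℝ) ∉ uIcc ε 1 := by rw [uIcc_of_le hε1]; exact fun h0 => by linarith [h0.1]
  calc ∫ u in ε..1, (ε + u) ^ (-α) * u ^ (-a)
      ≤ ∫ u in ε..1, u ^ (-(α + a)) :=
        integral_mono_on_of_le_Ioo hε1
          (intervalIntegrable_add_rpow_mul_rpow hε ha hε.le zero_le_one)
          (intervalIntegrable_rpow (Or.inr h0))
          fun u hu => add_rpow_mul_rpow_le_rpow hε.le hα (by linarith [hu.1])
    _ = (ε ^ (1 - α - a) - 1) / (α + a - 1) := by
        rw [integral_rpow_neg h.ne' (Or.inr h0), one_rpow, ← neg_div_neg_eq]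
        ring_nf
    _ ≤ ε ^ (1 - α - a) / (α + a - 1) := by gcongr; linarith

lemma integral_zero_to_one_bounds_of_one_lt (hε : 0 < ε) (hε1 : ε ≤ 1) (hα : 0 ≤ α)
    (ha : a < 1) (h : 1 < α + a) :
    2 ^ (-α) / (1 - a) * ε ^ (1 - α - a) ≤ ∫ u in (0:ℝ)..1, (ε + u) ^ (-α) * u ^ (-a) ∧
      ∫ u in (0:ℝ)..1, (ε + u) ^ (-α) * u ^ (-a) ≤
        (1 / (1 - a) + 1 / (α + a - 1)) * ε ^ (1 - α - a) := by
  have hsplit := integral_add_adjacent_intervals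
    (intervalIntegrable_add_rpow_mul_rpow (α := α) hε ha le_rfl hε.le)
    (intervalIntegrable_add_rpow_mul_rpow hε ha hε.le zero_le_one)
  have htail_nonneg : 0 ≤ ∫ u in ε..1, (ε + u) ^ (-α) * u ^ (-a) :=
    integral_nonneg hε1 fun u hu => add_rpow_mul_rpow_nonneg hε.le (by linarith [hu.1])
  rw [← hsplit]
  constructor
  · linarith [le_integral_zero_to_self hε hα ha]
  · calc _ ≤ ε ^ (1 - α - a) / (1 - a) + ε ^ (1 - α - a) / (α + a - 1) :=
          add_le_add (integral_zero_to_self_le hε hα ha) (integral_self_to_one_le hε hε1 hα ha h)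
      _ = _ := by ring

lemma integral_zero_to_one_bounds_of_lt_one (hε : 0 < ε) (hε1 : ε ≤ 1) (hα : 0 ≤ α)
    (ha0 : 0 ≤ a) (h : α + a < 1) :
    2 ^ (-α) ≤ ∫ u in (0:ℝ)..1, (ε + u) ^ (-α) * u ^ (-a) ∧
      ∫ u in (0:ℝ)..1, (ε + u) ^ (-α) * u ^ (-a) ≤ 1 / (1 - α - a) := by
  have ha : a < 1 := by linarith
  have hint := intervalIntegrable_add_rpow_mul_rpow (α := α) hε ha le_rfl zero_le_one
  constructor
  · calc (2:ℝ) ^ (-α) = ∫ _ in (0:ℝ)..1, (2:ℝ) ^ (-α) := by simp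
      _ ≤ _ := integral_mono_on_of_le_Ioo zero_le_one intervalIntegrable_const hint
          fun u hu => by
            have h1 : 2 ^ (-α) ≤ (ε + u) ^ (-α) :=
              rpow_le_rpow_of_nonpos (by linarith [hu.1]) (by linarith [hu.2]) (by linarith)
            have h2 : 1 ≤ u ^ (-a) :=
              one_le_rpow_of_pos_of_le_one_of_nonpos hu.1 hu.2.le (by linarith)
            exact h1.trans (le_mul_of_one_le_right (rpow_nonneg (by linarith [hu.1]) _) h2)
  · calc ∫ u in (0:ℝ)..1, (ε + u) ^ (-α) * u ^ (-a)
        ≤ ∫ u in (0:ℝ)..1, u ^ (-(α + a)) :=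
          integral_mono_on_of_le_Ioo zero_le_one hint (intervalIntegrable_rpow' (by linarith))
            fun u hu => add_rpow_mul_rpow_le_rpow hε.le hα hu.1
      _ = 1 / (1 - α - a) := by
          rw [integral_rpow_neg h.ne (Or.inl h), one_rpow, zero_rpow (by linarith), sub_sub]
          ring

end ShiftedKernel

theorem stmt_9_general (a α : ℝ) (ha0 : 0 < a) (ha1 : a < 1) (hα : 0 < α)
    (hne : α + a ≠ 1) :
    ∃ c : ℝ, 1 < c ∧ ∀ t : ℝ, 1 < t → t < 5/4 →
      (α + a > 1 →
        c⁻¹ * (t - 1) ^ (1 - α - a) ≤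
          (∫ s in (0:ℝ)..1, (t - s) ^ (-α) * (1 - s) ^ (-a)) ∧
        (∫ s in (0:ℝ)..1, (t - s) ^ (-α) * (1 - s) ^ (-a)) ≤
          c * (t - 1) ^ (1 - α - a)) ∧
      (α + a < 1 →
        c⁻¹ ≤ (∫ s in (0:ℝ)..1, (t - s) ^ (-α) * (1 - s) ^ (-a)) ∧
        (∫ s in (0:ℝ)..1, (t - s) ^ (-α) * (1 - s) ^ (-a)) ≤ c) := by
  set C := 1 / (1 - a) + 1 / |α + a - 1| with hC_def
  have hC : 1 < C := by
    have : 1 ≤ 1 / (1 - a) := one_le_one_div (by linarith) (by linarith)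
    have : 0 < 1 / |α + a - 1| := by simpa [sub_eq_zero] using hne
    linarith
  have h2α : 1 ≤ (2:ℝ) ^ α := one_le_rpow one_le_two hα.le
  have hc_inv : (2 ^ α * C)⁻¹ ≤ 2 ^ (-α) := by
    rw [rpow_neg zero_le_two]
    exact inv_anti₀ (by positivity) (le_mul_of_one_le_right (by positivity) hC.le)
  have hC_le : C ≤ 2 ^ α * C := le_mul_of_one_le_left (by linarith) h2α
  refine ⟨2 ^ α * C, one_lt_mul_of_le_of_lt h2α hC, fun t ht1 ht2 => ?_⟩
  rw [integral_sub_rpow_mul_one_sub_rpow_eq]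
  have hε : 0 < t - 1 := by linarith
  have hε1 : t - 1 ≤ 1 := by linarith
  refine ⟨fun h => ?_, fun h => ?_⟩
  · obtain ⟨hlow, hup⟩ := integral_zero_to_one_bounds_of_one_lt hε hε1 hα.le ha1 h
    have hX := (rpow_pos_of_pos hε (1 - α - a)).le
    have h2α_le : (2:ℝ) ^ (-α) ≤ 2 ^ (-α) / (1 - a) :=
      le_div_self (by positivity) (by linarith) (by linarith)
    have hC_sup : 1 / (1 - a) + 1 / (α + a - 1) ≤ 2 ^ α * C := by
      rwa [← abs_of_pos (by linarith : 0 < α + a - 1)]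
    exact ⟨(mul_le_mul_of_nonneg_right (hc_inv.trans h2α_le) hX).trans hlow,
      hup.trans (mul_le_mul_of_nonneg_right hC_sup hX)⟩
  · obtain ⟨hlow, hup⟩ := integral_zero_to_one_bounds_of_lt_one hε hε1 hα.le ha0.le h
    have hC_sub : 1 / (1 - α - a) ≤ C := by
      rw [hC_def, abs_of_neg (by linarith), neg_sub, sub_sub]
      linarith [one_div_pos.mpr (by linarith : 0 < 1 - a)]
    exact ⟨hc_inv.trans hlow, hup.trans (hC_sub.trans hC_le)⟩

theorem stmt_9 (a α : ℝ) (ha0 : 0 < a) (ha1 : a < 1) (hα : 0 < α)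
    (hα1 : α ≠ 1) (hne : α + a ≠ 1) :
    ∃ c : ℝ, 1 < c ∧ ∀ t : ℝ, 1 < t → t < 5/4 →
      (α + a > 1 →
        c⁻¹ * (t - 1) ^ (1 - α - a) ≤
          (∫ s in (0:ℝ)..1, (t - s) ^ (-α) * (1 - s) ^ (-a)) ∧
        (∫ s in (0:ℝ)..1, (t - s) ^ (-α) * (1 - s) ^ (-a)) ≤
          c * (t - 1) ^ (1 - α - a)) ∧
      (α + a < 1 →
        c⁻¹ ≤ (∫ s in (0:ℝ)..1, (t - s) ^ (-α) * (1 - s) ^ (-a)) ∧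
        (∫ s in (0:ℝ)..1, (t - s) ^ (-α) * (1 - s) ^ (-a)) ≤ c) :=
  stmt_9_general a α ha0 ha1 hα hne
end

section
/- Let 0 < a < 1, 0 < α < 1 with α + a ≠ 1, and 3/4 < t < 1. Define Ψ(t) = ∫_0^t (t-s)^{-α} (1-s)^{-a} ds. Then there exists c > 1 depending only on a, α such that: if α + a > 1, then c^{-1}(1-t)^{1-α-a} ≤ Ψ(t) ≤ c(1-t)^{1-α-a}; and if α + a < 1, then c^{-1} ≤ Ψ(t) ≤ c. -/
/-! Split `[0, t]` at `2t - 1`, the point at distance `1 - t` below `t`. Near the diagonal `1 - s`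
stays between `1 - t` and `2(1 - t)`, so that piece is `(1 - t)^(-a) ∫ (t - s)^(-α) ≍ (1 - t)^(1 - α - a)`
up to a factor `2^a`. Away from it `t - s ≥ (1 - s) / 2`, so that piece is at most
`2^α ∫₀^(2t-1) (1 - s)^(-(α + a)) ds`, which is `O(max 1 ((1 - t)^(1 - α - a)))` because
`α + a ≠ 1`. Together with the trivial bound `Ψ(t) ≥ t`, coming from an integrand `≥ 1`, this gives
`Ψ(t) ≍ max 1 ((1 - t)^(1 - α - a))` for `1/2 ≤ t < 1`. -/

open Real intervalIntegral Set
open MeasureTheory (volume)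

lemma intervalIntegrable_sub_rpow_neg {r : ℝ} (hr : r < 1) (c p q : ℝ) :
    IntervalIntegrable (fun s => (c - s) ^ (-r)) volume p q := by
  simpa using ((intervalIntegrable_rpow' (a := c - p) (b := c - q) (by linarith)).comp_sub_left c)

lemma integral_sub_rpow_neg {r : ℝ} (hr : r < 1) (p q : ℝ) :
    ∫ s in p..q, (q - s) ^ (-r) = (q - p) ^ (1 - r) / (1 - r) := by
  rw [integral_comp_sub_left (fun u => u ^ (-r)) q, sub_self, integral_rpow (Or.inl (by linarith)),
    zero_rpow (by linarith), sub_zero, neg_add_eq_sub]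

lemma integral_sub_rpow_neg_of_lt {r c p q : ℝ} (hr : r ≠ 1) (hpq : p ≤ q) (hq : q < c) :
    ∫ s in p..q, (c - s) ^ (-r) = ((c - p) ^ (1 - r) - (c - q) ^ (1 - r)) / (1 - r) := by
  have h0 : (0 : ℝ) ∉ uIcc (c - q) (c - p) := by
    rw [uIcc_of_le (by linarith)]
    exact fun h => by linarith [h.1]
  rw [integral_comp_sub_left (fun u => u ^ (-r)) c,
    integral_rpow (Or.inr ⟨fun h => hr (by linarith [neg_inj.mp h]), h0⟩), neg_add_eq_sub]

lemma one_sub_rpow_div_le_max {x : ℝ} (hx : 0 ≤ x) (β : ℝ) :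
    (1 - x ^ β) / β ≤ max 1 (x ^ β) / |β| := by
  rcases lt_trichotomy β 0 with hβ | rfl | hβ
  · rw [abs_of_neg hβ, ← neg_div_neg_eq, neg_sub]
    exact div_le_div_of_nonneg_right (by linarith [le_max_right 1 (x ^ β)]) (by linarith)
  · simp
  · rw [abs_of_pos hβ]
    exact div_le_div_of_nonneg_right (by linarith [le_max_left 1 (x ^ β), rpow_nonneg hx β]) hβ.le

lemma rpow_le_max_one_rpow {x y : ℝ} (hx : 0 < x) (hxy : x ≤ y) (hy : y ≤ 1) (β : ℝ) :
    y ^ β ≤ max 1 (x ^ β) := by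
  rcases le_or_gt 0 β with hβ | hβ
  · exact (rpow_le_one (hx.le.trans hxy) hy hβ).trans (le_max_left _ _)
  · exact (rpow_le_rpow_of_nonpos hx hxy hβ.le).trans (le_max_right _ _)

noncomputable def psi (α a t : ℝ) : ℝ := ∫ s in (0:ℝ)..t, (t - s) ^ (-α) * (1 - s) ^ (-a)

section

variable {α a t : ℝ}

lemma intervalIntegrable_psi_integrand (hα : α < 1) (ht : t < 1) {p q : ℝ} (hp : p ≤ t)
    (hq : q ≤ t) :
    IntervalIntegrable (fun s => (t - s) ^ (-α) * (1 - s) ^ (-a)) volume p q := by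
  refine (intervalIntegrable_sub_rpow_neg hα t p q).mul_continuousOn ?_
  refine (continuousOn_const.sub continuousOn_id).rpow_const fun s hs => Or.inl ?_
  have : s ≤ t := hs.2.trans (sup_le hp hq)
  show 1 - s ≠ 0
  linarith

lemma psi_eq_add (hα : α < 1) (ht0 : 0 ≤ t) (ht : t < 1) :
    psi α a t = (∫ s in (0:ℝ)..(2 * t - 1), (t - s) ^ (-α) * (1 - s) ^ (-a)) +
      ∫ s in (2 * t - 1)..t, (t - s) ^ (-α) * (1 - s) ^ (-a) :=
  (integral_add_adjacent_intervals (intervalIntegrable_psi_integrand hα ht (by linarith)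
    (by linarith)) (intervalIntegrable_psi_integrand hα ht (by linarith) le_rfl)).symm

lemma integral_psi_integrand_nonneg (ht : t < 1) {p q : ℝ} (hpq : p ≤ q) (hq : q ≤ t) :
    0 ≤ ∫ s in p..q, (t - s) ^ (-α) * (1 - s) ^ (-a) :=
  integral_nonneg hpq fun s hs =>
    mul_nonneg (rpow_nonneg (by linarith [hs.2]) _) (rpow_nonneg (by linarith [hs.2]) _)

lemma self_le_psi (hα0 : 0 ≤ α) (hα1 : α < 1) (ha : 0 ≤ a) (ht0 : 0 ≤ t) (ht1 : t < 1) :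
    t ≤ psi α a t := by
  calc t = ∫ _ in (0:ℝ)..t, (1 : ℝ) := by simp
    _ ≤ psi α a t := by
      refine integral_mono_on_of_le_Ioo ht0 intervalIntegrable_const
        (intervalIntegrable_psi_integrand hα1 ht1 ht0 le_rfl) fun s hs => ?_
      exact one_le_mul_of_one_le_of_one_le
        (one_le_rpow_of_pos_of_le_one_of_nonpos (by linarith [hs.2]) (by linarith [hs.1])
          (by linarith))
        (one_le_rpow_of_pos_of_le_one_of_nonpos (by linarith [hs.2]) (by linarith [hs.1])
          (by linarith))

lemma integral_near_diagonal_ge (hα : α < 1) (ha : 0 ≤ a) (ht : t < 1) :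
    2 ^ (-a) * (1 - t) ^ (1 - α - a) / (1 - α) ≤
      ∫ s in (2 * t - 1)..t, (t - s) ^ (-α) * (1 - s) ^ (-a) := by
  have hε : 0 < 1 - t := by linarith
  have hpow : (1 - t) ^ (-a) * (1 - t) ^ (1 - α) = (1 - t) ^ (1 - α - a) := by
    rw [← rpow_add hε]
    ring_nf
  calc 2 ^ (-a) * (1 - t) ^ (1 - α - a) / (1 - α)
      = ∫ s in (2 * t - 1)..t, (2 * (1 - t)) ^ (-a) * (t - s) ^ (-α) := by
        rw [intervalIntegral.integral_const_mul, integral_sub_rpow_neg hα,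
          show t - (2 * t - 1) = 1 - t by ring, mul_rpow zero_le_two hε.le, ← hpow]
        ring
    _ ≤ _ := by
      refine integral_mono_on_of_le_Ioo (by linarith)
        ((intervalIntegrable_sub_rpow_neg hα t _ _).const_mul _)
        (intervalIntegrable_psi_integrand hα ht (by linarith) le_rfl) fun s hs => ?_
      rw [mul_comm]
      exact mul_le_mul_of_nonneg_left
        (rpow_le_rpow_of_nonpos (by linarith [hs.2]) (by linarith [hs.1]) (by linarith))
        (rpow_nonneg (by linarith [hs.2]) _)

lemma integral_near_diagonal_le (hα : α < 1) (ha : 0 ≤ a) (ht : t < 1) :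
    ∫ s in (2 * t - 1)..t, (t - s) ^ (-α) * (1 - s) ^ (-a) ≤ (1 - t) ^ (1 - α - a) / (1 - α) := by
  have hε : 0 < 1 - t := by linarith
  have hpow : (1 - t) ^ (-a) * (1 - t) ^ (1 - α) = (1 - t) ^ (1 - α - a) := by
    rw [← rpow_add hε]
    ring_nf
  calc _ ≤ ∫ s in (2 * t - 1)..t, (1 - t) ^ (-a) * (t - s) ^ (-α) := by
        refine integral_mono_on_of_le_Ioo (by linarith)
          (intervalIntegrable_psi_integrand hα ht (by linarith) le_rfl)
          ((intervalIntegrable_sub_rpow_neg hα t _ _).const_mul _) fun s hs => ?_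
        rw [mul_comm ((1 - t) ^ (-a))]
        exact mul_le_mul_of_nonneg_left
          (rpow_le_rpow_of_nonpos hε (by linarith [hs.2]) (by linarith))
          (rpow_nonneg (by linarith [hs.2]) _)
    _ = (1 - t) ^ (1 - α - a) / (1 - α) := by
        rw [intervalIntegral.integral_const_mul, integral_sub_rpow_neg hα,
          show t - (2 * t - 1) = 1 - t by ring, ← hpow]
        ring

lemma integral_off_diagonal_le (hα0 : 0 ≤ α) (hα1 : α < 1) (hne : α + a ≠ 1) (ht0 : 1 / 2 ≤ t)
    (ht1 : t < 1) :
    ∫ s in (0:ℝ)..(2 * t - 1), (t - s) ^ (-α) * (1 - s) ^ (-a) ≤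
      2 ^ α * ((1 - (2 * (1 - t)) ^ (1 - α - a)) / (1 - α - a)) := by
  have hcont : ContinuousOn (fun s => (1 - s) ^ (-(α + a))) (uIcc 0 (2 * t - 1)) := by
    refine (continuousOn_const.sub continuousOn_id).rpow_const fun s hs => Or.inl ?_
    have : s ≤ 2 * t - 1 := hs.2.trans (sup_le (by linarith) le_rfl)
    show 1 - s ≠ 0
    linarith
  calc _ ≤ ∫ s in (0:ℝ)..(2 * t - 1), 2 ^ α * (1 - s) ^ (-(α + a)) := by
        refine integral_mono_on_of_le_Ioo (by linarith)
          (intervalIntegrable_psi_integrand hα1 ht1 (by linarith) (by linarith))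
          (hcont.intervalIntegrable.const_mul _) fun s hs => ?_
        have h1s : 0 < 1 - s := by linarith [hs.2]
        -- on this range `t - s ≥ (1 - s) / 2`
        calc (t - s) ^ (-α) * (1 - s) ^ (-a) ≤ ((1 - s) / 2) ^ (-α) * (1 - s) ^ (-a) := by
              gcongr ?_ * _
              exact rpow_le_rpow_of_nonpos (by positivity) (by linarith [hs.2]) (by linarith)
          _ = 2 ^ α * (1 - s) ^ (-(α + a)) := by
              rw [div_rpow h1s.le zero_le_two, rpow_neg zero_le_two, neg_add, rpow_add h1s]
              field_simp
    _ = _ := by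
        rw [intervalIntegral.integral_const_mul,
          integral_sub_rpow_neg_of_lt hne (by linarith) (by linarith), sub_zero, one_rpow,
          ← sub_sub, show 1 - (2 * t - 1) = 2 * (1 - t) by ring]

lemma max_one_rpow_le_psi (hα0 : 0 ≤ α) (hα1 : α < 1) (ha : 0 ≤ a) (ht0 : 1 / 2 ≤ t)
    (ht1 : t < 1) :
    max 1 ((1 - t) ^ (1 - α - a)) ≤ 2 ^ (a + 1) * psi α a t := by
  have hpsi : 1 / 2 ≤ psi α a t := ht0.trans (self_le_psi hα0 hα1 ha (by linarith) ht1)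
  have hnear : 2 ^ (-a) * (1 - t) ^ (1 - α - a) / (1 - α) ≤ psi α a t := by
    rw [psi_eq_add hα1 (by linarith) ht1]
    linarith [integral_near_diagonal_ge hα1 ha ht1,
      integral_psi_integrand_nonneg (α := α) (a := a) ht1 (p := 0) (q := 2 * t - 1) (by linarith)
        (by linarith)]
  have h2a : 1 ≤ (2 : ℝ) ^ a := one_le_rpow one_le_two ha
  rw [rpow_add_one two_ne_zero]
  refine max_le (by nlinarith) ?_
  calc (1 - t) ^ (1 - α - a) ≤ (1 - t) ^ (1 - α - a) / (1 - α) :=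
        le_div_self (rpow_nonneg (by linarith) _) (by linarith) (by linarith)
    _ = 2 ^ a * (2 ^ (-a) * (1 - t) ^ (1 - α - a) / (1 - α)) := by
        rw [rpow_neg zero_le_two]
        field_simp
    _ ≤ 2 ^ a * psi α a t := by gcongr
    _ ≤ 2 ^ a * 2 * psi α a t := by nlinarith

lemma psi_le_mul_max_one_rpow (hα0 : 0 ≤ α) (hα1 : α < 1) (ha : 0 ≤ a) (hne : α + a ≠ 1)
    (ht0 : 1 / 2 ≤ t) (ht1 : t < 1) :
    psi α a t ≤ (2 / |1 - α - a| + 1 / (1 - α)) * max 1 ((1 - t) ^ (1 - α - a)) := by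
  set M := max 1 ((1 - t) ^ (1 - α - a))
  have hε : 0 < 1 - t := by linarith
  have hfar : 2 ^ α * ((1 - (2 * (1 - t)) ^ (1 - α - a)) / (1 - α - a)) ≤
      2 * (M / |1 - α - a|) := by
    have h2M : max 1 ((2 * (1 - t)) ^ (1 - α - a)) ≤ M :=
      max_le (le_max_left _ _) (rpow_le_max_one_rpow hε (by linarith) (by linarith) _)
    calc _ ≤ 2 ^ α * (M / |1 - α - a|) :=
          mul_le_mul_of_nonneg_left ((one_sub_rpow_div_le_max (by linarith) _).trans
            (div_le_div_of_nonneg_right h2M (abs_nonneg _))) (rpow_nonneg zero_le_two _)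
      _ ≤ 2 * (M / |1 - α - a|) := by
          gcongr
          simpa using rpow_le_rpow_of_exponent_le one_le_two hα1.le
  have hnear : (1 - t) ^ (1 - α - a) / (1 - α) ≤ M / (1 - α) :=
    div_le_div_of_nonneg_right (le_max_right _ _) (by linarith)
  rw [psi_eq_add hα1 (by linarith) ht1]
  calc _ ≤ 2 * (M / |1 - α - a|) + M / (1 - α) :=
        add_le_add ((integral_off_diagonal_le hα0 hα1 hne ht0 ht1).trans hfar)
          ((integral_near_diagonal_le hα1 ha ht1).trans hnear)
    _ = _ := by ring

theorem psi_comparable (hα0 : 0 ≤ α) (hα1 : α < 1) (ha : 0 ≤ a) (hne : α + a ≠ 1) :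
    ∃ c : ℝ, 1 < c ∧ ∀ t, 1 / 2 ≤ t → t < 1 →
      c⁻¹ * max 1 ((1 - t) ^ (1 - α - a)) ≤ psi α a t ∧
        psi α a t ≤ c * max 1 ((1 - t) ^ (1 - α - a)) := by
  have h2a : 2 ≤ (2 : ℝ) ^ (a + 1) := by
    simpa using rpow_le_rpow_of_exponent_le one_le_two (by linarith : 1 ≤ a + 1)
  have hK : 0 ≤ 2 / |1 - α - a| + 1 / (1 - α) :=
    add_nonneg (by positivity) (div_nonneg zero_le_one (by linarith))
  refine ⟨2 ^ (a + 1) + (2 / |1 - α - a| + 1 / (1 - α)), by linarith, fun t ht0 ht1 => ⟨?_, ?_⟩⟩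
  · have hpsi : 0 ≤ psi α a t := integral_psi_integrand_nonneg ht1 (by linarith) le_rfl
    rw [inv_mul_le_iff₀ (by linarith)]
    exact (max_one_rpow_le_psi hα0 hα1 ha ht0 ht1).trans
      (mul_le_mul_of_nonneg_right (by linarith) hpsi)
  · have hM : 0 ≤ max 1 ((1 - t) ^ (1 - α - a)) := zero_le_one.trans (le_max_left _ _)
    exact (psi_le_mul_max_one_rpow hα0 hα1 ha hne ht0 ht1).trans
      (mul_le_mul_of_nonneg_right (by linarith) hM)

end

theorem stmt_10_general (a α : ℝ) (ha0 : 0 < a) (hα0 : 0 < α)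
    (hα1 : α < 1) (hne : α + a ≠ 1) :
    ∃ c : ℝ, 1 < c ∧ ∀ t : ℝ, 3/4 < t → t < 1 →
      (α + a > 1 →
        c⁻¹ * (1 - t) ^ (1 - α - a) ≤
          (∫ s in (0:ℝ)..t, (t - s) ^ (-α) * (1 - s) ^ (-a)) ∧
        (∫ s in (0:ℝ)..t, (t - s) ^ (-α) * (1 - s) ^ (-a)) ≤
          c * (1 - t) ^ (1 - α - a)) ∧
      (α + a < 1 →
        c⁻¹ ≤ (∫ s in (0:ℝ)..t, (t - s) ^ (-α) * (1 - s) ^ (-a)) ∧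
        (∫ s in (0:ℝ)..t, (t - s) ^ (-α) * (1 - s) ^ (-a)) ≤ c) := by
  obtain ⟨c, hc, hpsi⟩ := psi_comparable hα0.le hα1 ha0.le hne
  refine ⟨c, hc, fun t ht0 ht1 => ?_⟩
  have hε : 0 < 1 - t := by linarith
  have hε1 : 1 - t ≤ 1 := by linarith
  obtain ⟨hlow, hup⟩ := hpsi t (by linarith) ht1
  refine ⟨fun hβ => ?_, fun hβ => ?_⟩
  · rw [max_eq_right (one_le_rpow_of_pos_of_le_one_of_nonpos hε hε1 (by linarith))] at hlow hup
    exact ⟨hlow, hup⟩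
  · rw [max_eq_left (rpow_le_one hε.le hε1 (by linarith)), mul_one] at hlow hup
    exact ⟨hlow, hup⟩

theorem stmt_10 (a α : ℝ) (ha0 : 0 < a) (ha1 : a < 1) (hα0 : 0 < α)
    (hα1 : α < 1) (hne : α + a ≠ 1) :
    ∃ c : ℝ, 1 < c ∧ ∀ t : ℝ, 3/4 < t → t < 1 →
      (α + a > 1 →
        c⁻¹ * (1 - t) ^ (1 - α - a) ≤
          (∫ s in (0:ℝ)..t, (t - s) ^ (-α) * (1 - s) ^ (-a)) ∧
        (∫ s in (0:ℝ)..t, (t - s) ^ (-α) * (1 - s) ^ (-a)) ≤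
          c * (1 - t) ^ (1 - α - a)) ∧
      (α + a < 1 →
        c⁻¹ ≤ (∫ s in (0:ℝ)..t, (t - s) ^ (-α) * (1 - s) ^ (-a)) ∧
        (∫ s in (0:ℝ)..t, (t - s) ^ (-α) * (1 - s) ^ (-a)) ≤ c) :=
  stmt_10_general a α ha0 hα0 hα1 hne
end

section
/- Let 0 < a < 1 and α > 0 with α ≠ 1, α + a ≠ 1. For 1 < t < 5/4 and 0 < x_n < 1/2 define Ψ̃(t) = ∫_0^1 (t-s)^{-α} exp(-x_n²/(4(t-s))) (1-s)^{-a} ds. Then there exists c > 1 such that, writing M = max(t-1, x_n²): if α + a > 1 then c^{-1} M^{1-α-a} ≤ Ψ̃(t) ≤ c M^{1-α-a}, and if α + a < 1 then c^{-1} ≤ Ψ̃(t) ≤ c. -/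
/-!
Substituting `u = 1 - s` and writing `ε = t - 1`, `Ψ̃(t) = ∫₀¹ k(ε + u) u^{-a} du` with the
kernel `k(v) = v^{-α} e^{-x²/(4v)}`, and the natural scale is `M = max(ε, x²)`.

Lower bounds: for `u ∈ [M, 2M]` we have `x² ≤ ε + u ≤ 3M`, so the integrand is at least
`(3M)^{-α} e^{-1/4} (2M)^{-a}` on an interval of length `M`; for `u ∈ [1/2, 1]` it is at
least `(5/4)^{-α} e^{-1/4}`.

Upper bounds: `k(v) ≤ v^{-α}`, and `y^α e^{-y} ≤ α^α` gives `k(v) ≤ (4α)^α x^{-2α}`, so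
`k(ε + u) ≲ M^{-α}` for `u ≤ M` and `k(ε + u) ≤ u^{-α}` always. Integrating against
`u^{-a}` gives `≲ M^{1-α-a}` when `α + a > 1`, and `≤ 1/(1-α-a)` when `α + a < 1`.
-/

open Real intervalIntegral MeasureTheory Set

lemma exp_neg_le_rpow_mul_rpow_neg {α y : ℝ} (hα : 0 < α) (hy : 0 < y) :
    exp (-y) ≤ α ^ α * y ^ (-α) := by
  rw [rpow_def_of_pos hα, rpow_def_of_pos hy, ← exp_add, exp_le_exp]
  have h := log_le_sub_one_of_pos (div_pos hy hα)
  rw [log_div hy.ne' hα.ne', le_sub_iff_add_le, le_div_iff₀ hα] at h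
  nlinarith

lemma mul_le_integral_of_le_on {f : ℝ → ℝ} {a b p q m : ℝ} (hap : a ≤ p) (hpq : p ≤ q)
    (hqb : q ≤ b) (hf : IntervalIntegrable f volume a b) (hf0 : ∀ x ∈ Ioc a b, 0 ≤ f x)
    (hm : ∀ x ∈ Icc p q, m ≤ f x) :
    (q - p) * m ≤ ∫ x in a..b, f x :=
  calc (q - p) * m = ∫ _ in p..q, m := by rw [intervalIntegral.integral_const, smul_eq_mul]
    _ ≤ ∫ x in p..q, f x := integral_mono_on hpq intervalIntegrable_const
        (hf.mono_set (by
          rw [uIcc_of_le hpq, uIcc_of_le (hap.trans (hpq.trans hqb))]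
          exact Icc_subset_Icc hap hqb)) hm
    _ ≤ ∫ x in a..b, f x := integral_mono_interval hap hpq hqb
        ((ae_restrict_iff' measurableSet_Ioc).2 (ae_of_all _ hf0)) hf

lemma exists_one_lt_inv_le_and_le {L : ℝ} (hL : 0 < L) (U : ℝ) :
    ∃ c : ℝ, 1 < c ∧ c⁻¹ ≤ L ∧ U ≤ c :=
  ⟨max (max U L⁻¹) 2, lt_max_of_lt_right one_lt_two,
    (inv_le_comm₀ (by positivity) hL).2 (le_max_of_le_left (le_max_right _ _)),
    le_max_of_le_left (le_max_left _ _)⟩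

noncomputable def heatKernel (α x v : ℝ) : ℝ := v ^ (-α) * exp (-x ^ 2 / (4 * v))

section heatKernel

variable {α v : ℝ} (x : ℝ)

lemma heatKernel_nonneg (hv : 0 ≤ v) : 0 ≤ heatKernel α x v :=
  mul_nonneg (rpow_nonneg hv _) (exp_pos _).le

lemma heatKernel_le_rpow_neg (hv : 0 ≤ v) : heatKernel α x v ≤ v ^ (-α) :=
  mul_le_of_le_one_right (rpow_nonneg hv _) <| exp_le_one_iff.2 <| by
    rw [neg_div]; exact neg_nonpos.2 (by positivity)

lemma heatKernel_le_sq_rpow_neg (hα : 0 < α) (hv : 0 < v) (hx : x ≠ 0) :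
    heatKernel α x v ≤ (4 * α) ^ α * (x ^ 2) ^ (-α) := by
  have hy : 0 < x ^ 2 / (4 * v) := by positivity
  have hexp : exp (-x ^ 2 / (4 * v)) ≤ α ^ α * (x ^ 2 / (4 * v)) ^ (-α) := by
    rw [neg_div]; exact exp_neg_le_rpow_mul_rpow_neg hα hy
  have hscale : v ^ (-α) * (x ^ 2 / (4 * v)) ^ (-α) = 4 ^ α * (x ^ 2) ^ (-α) := by
    rw [← mul_rpow hv.le hy.le, show v * (x ^ 2 / (4 * v)) = x ^ 2 / 4 by field_simp,
      div_rpow (sq_nonneg x) (by norm_num), rpow_neg (by norm_num : (0:ℝ) ≤ 4), div_inv_eq_mul]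
    ring
  calc heatKernel α x v ≤ v ^ (-α) * (α ^ α * (x ^ 2 / (4 * v)) ^ (-α)) :=
        mul_le_mul_of_nonneg_left hexp (rpow_nonneg hv.le _)
    _ = (4 * α) ^ α * (x ^ 2) ^ (-α) := by
        rw [mul_left_comm, hscale, mul_rpow (by norm_num) hα.le]; ring

lemma heatKernel_le_max_rpow_neg (hα : 0 < α) (hv : 0 < v) :
    heatKernel α x v ≤ max 1 ((4 * α) ^ α) * max v (x ^ 2) ^ (-α) := by
  rcases le_total (x ^ 2) v with h | h
  · rw [max_eq_left h]
    exact (heatKernel_le_rpow_neg x hv.le).trans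
      (le_mul_of_one_le_left (rpow_nonneg hv.le _) (le_max_left _ _))
  · have hx : x ≠ 0 := by rintro rfl; norm_num at h; linarith
    rw [max_eq_right h]
    exact (heatKernel_le_sq_rpow_neg x hα hv hx).trans
      (mul_le_mul_of_nonneg_right (le_max_right _ _) (rpow_nonneg (sq_nonneg x) _))

lemma rpow_neg_mul_exp_le_heatKernel {T : ℝ} (hα : 0 ≤ α) (hv : 0 < v) (hxv : x ^ 2 ≤ v)
    (hvT : v ≤ T) : T ^ (-α) * exp (-(1 / 4)) ≤ heatKernel α x v := by
  refine mul_le_mul (rpow_le_rpow_of_nonpos hv hvT (by linarith)) (exp_le_exp.2 ?_)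
    (exp_pos _).le (rpow_nonneg hv.le _)
  rw [neg_div, neg_le_neg_iff, div_le_iff₀ (by positivity)]
  linarith

lemma intervalIntegrable_heatKernel_mul_rpow {a ε b : ℝ} (ha : a < 1) (hε : 0 < ε)
    (hb : 0 ≤ b) :
    IntervalIntegrable (fun u => heatKernel α x (ε + u) * u ^ (-a)) volume 0 b := by
  refine (intervalIntegrable_rpow' (by linarith)).continuousOn_mul fun u hu => ?_
  rw [uIcc_of_le hb] at hu
  have : ε + u ≠ 0 := by linarith [hu.1]
  exact ContinuousAt.continuousWithinAt (by unfold heatKernel; fun_prop (disch := simp [this]))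

end heatKernel

noncomputable def psiTilde (a α t x : ℝ) : ℝ :=
  ∫ s in (0:ℝ)..1, (t - s) ^ (-α) * exp (-x ^ 2 / (4 * (t - s))) * (1 - s) ^ (-a)

lemma psiTilde_eq_integral_heatKernel (a α t x : ℝ) :
    psiTilde a α t x = ∫ u in (0:ℝ)..1, heatKernel α x (t - 1 + u) * u ^ (-a) := by
  have h := integral_comp_sub_left (fun u => heatKernel α x (t - 1 + u) * u ^ (-a)) (1:ℝ)
    (a := 0) (b := 1)
  simp only [sub_zero, sub_self, sub_add_sub_cancel] at h
  rw [← h]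
  rfl

section psiTilde

variable {a α t : ℝ} (x : ℝ)

lemma const_le_psiTilde (hα : 0 ≤ α) (ha0 : 0 ≤ a) (ha1 : a < 1) (ht1 : 1 < t)
    (ht2 : t ≤ 5 / 4) (hx : x ^ 2 ≤ 1 / 2) :
    1 / 2 * ((5 / 4) ^ (-α) * exp (-(1 / 4))) ≤ psiTilde a α t x := by
  rw [psiTilde_eq_integral_heatKernel]
  have hlow := mul_le_integral_of_le_on (p := 1 / 2) (q := 1)
    (m := (5 / 4) ^ (-α) * exp (-(1 / 4))) (by norm_num) (by norm_num) le_rfl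
    (intervalIntegrable_heatKernel_mul_rpow x ha1 (sub_pos.2 ht1) zero_le_one)
    (fun u hu => mul_nonneg (heatKernel_nonneg x (by linarith [hu.1])) (rpow_nonneg hu.1.le _))
    fun u hu => (rpow_neg_mul_exp_le_heatKernel x hα (by linarith [hu.1]) (by linarith [hu.1])
      (by linarith [hu.2])).trans <|
        le_mul_of_one_le_right (heatKernel_nonneg x (by linarith [hu.1]))
          (one_le_rpow_of_pos_of_le_one_of_nonpos (by linarith [hu.1]) hu.2 (by linarith))
  convert hlow using 1
  norm_num

lemma rpow_le_psiTilde (hα : 0 ≤ α) (ha0 : 0 ≤ a) (ha1 : a < 1) (ht1 : 1 < t)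
    (hM : max (t - 1) (x ^ 2) ≤ 1 / 2) :
    3 ^ (-α) * 2 ^ (-a) * exp (-(1 / 4)) * max (t - 1) (x ^ 2) ^ (1 - α - a) ≤
      psiTilde a α t x := by
  set M := max (t - 1) (x ^ 2)
  have hεM : t - 1 ≤ M := le_max_left _ _
  have hxM : x ^ 2 ≤ M := le_max_right _ _
  have hM0 : 0 < M := lt_of_lt_of_le (sub_pos.2 ht1) hεM
  rw [psiTilde_eq_integral_heatKernel]
  have hlow := mul_le_integral_of_le_on (p := M) (q := 2 * M)
    (m := (3 * M) ^ (-α) * exp (-(1 / 4)) * (2 * M) ^ (-a)) hM0.le (by linarith) (by linarith)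
    (intervalIntegrable_heatKernel_mul_rpow x ha1 (sub_pos.2 ht1) zero_le_one)
    (fun u hu => mul_nonneg (heatKernel_nonneg x (by linarith [hu.1])) (rpow_nonneg hu.1.le _))
    fun u hu => mul_le_mul
      (rpow_neg_mul_exp_le_heatKernel x hα (by linarith [hu.1]) (by linarith [hu.1])
        (by linarith [hu.2]))
      (rpow_le_rpow_of_nonpos (by linarith [hu.1]) hu.2 (by linarith))
      (rpow_nonneg (by positivity) _) (heatKernel_nonneg x (by linarith [hu.1]))
  convert hlow using 1
  rw [mul_rpow (by norm_num) hM0.le, mul_rpow (by norm_num) hM0.le,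
    show 1 - α - a = 1 + -α + -a by ring, rpow_add hM0, rpow_add hM0, rpow_one]
  ring

lemma integral_heatKernel_mul_rpow_le_integral_rpow {ε p : ℝ} (hα : 0 ≤ α) (ha : a < 1)
    (hε : 0 < ε) (hp : 0 ≤ p) (hp1 : p ≤ 1)
    (hint : IntervalIntegrable (fun u => u ^ (-α - a)) volume p 1) :
    ∫ u in p..1, heatKernel α x (ε + u) * u ^ (-a) ≤ ∫ u in p..1, u ^ (-α - a) := by
  refine integral_mono_on_of_le_Ioo hp1
    ((intervalIntegrable_heatKernel_mul_rpow x ha hε zero_le_one).mono_set ?_) hint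
    fun u hu => ?_
  · rw [uIcc_of_le hp1, uIcc_of_le zero_le_one]
    exact Icc_subset_Icc hp le_rfl
  · have hu0 : 0 < u := hp.trans_lt hu.1
    calc heatKernel α x (ε + u) * u ^ (-a) ≤ u ^ (-α) * u ^ (-a) :=
          mul_le_mul_of_nonneg_right ((heatKernel_le_rpow_neg x (by linarith)).trans
            (rpow_le_rpow_of_nonpos hu0 (by linarith) (by linarith))) (rpow_nonneg hu0.le _)
      _ = u ^ (-α - a) := by rw [← rpow_add hu0, sub_eq_add_neg]

lemma psiTilde_le_of_add_lt_one (hα : 0 ≤ α) (hαa : α + a < 1) (ht1 : 1 < t) :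
    psiTilde a α t x ≤ 1 / (1 - α - a) := by
  rw [psiTilde_eq_integral_heatKernel]
  refine (integral_heatKernel_mul_rpow_le_integral_rpow x hα (by linarith) (sub_pos.2 ht1)
    le_rfl zero_le_one (intervalIntegrable_rpow' (by linarith))).trans_eq ?_
  rw [integral_rpow (Or.inl (by linarith)), one_rpow, zero_rpow (by linarith)]
  ring_nf

lemma integral_heatKernel_mul_rpow_le_rpow (hα : 0 < α) (ha : a < 1) (ht1 : 1 < t) :
    ∫ u in (0:ℝ)..max (t - 1) (x ^ 2), heatKernel α x (t - 1 + u) * u ^ (-a) ≤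
      max 1 ((4 * α) ^ α) / (1 - a) * max (t - 1) (x ^ 2) ^ (1 - α - a) := by
  set M := max (t - 1) (x ^ 2)
  set K := max 1 ((4 * α) ^ α)
  have hM0 : 0 < M := lt_max_of_lt_left (sub_pos.2 ht1)
  have hbound : ∀ u ∈ Ioo 0 M,
      heatKernel α x (t - 1 + u) * u ^ (-a) ≤ K * M ^ (-α) * u ^ (-a) := fun u hu =>
    mul_le_mul_of_nonneg_right ((heatKernel_le_max_rpow_neg x hα (by linarith [hu.1])).trans
      (mul_le_mul_of_nonneg_left (rpow_le_rpow_of_nonpos hM0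
        (max_le_max (by linarith [hu.1]) le_rfl) (by linarith)) (by positivity)))
      (rpow_nonneg hu.1.le _)
  refine (integral_mono_on_of_le_Ioo hM0.le
    (intervalIntegrable_heatKernel_mul_rpow x ha (sub_pos.2 ht1) hM0.le)
    ((intervalIntegrable_rpow' (by linarith)).const_mul _) hbound).trans_eq ?_
  rw [intervalIntegral.integral_const_mul, integral_rpow (Or.inl (by linarith)),
    zero_rpow (by linarith), sub_zero, show 1 - α - a = -α + (-a + 1) by ring,
    rpow_add hM0 (-α)]
  ring

lemma psiTilde_le_rpow_of_one_lt_add (hα : 0 < α) (ha : a < 1) (hαa : 1 < α + a)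
    (ht1 : 1 < t) (hM : max (t - 1) (x ^ 2) ≤ 1) :
    psiTilde a α t x ≤ (max 1 ((4 * α) ^ α) / (1 - a) + 1 / (α + a - 1)) *
      max (t - 1) (x ^ 2) ^ (1 - α - a) := by
  have hnear := integral_heatKernel_mul_rpow_le_rpow x hα ha ht1
  set M := max (t - 1) (x ^ 2)
  have hM0 : 0 < M := lt_max_of_lt_left (sub_pos.2 ht1)
  have h0 : (0:ℝ) ∉ uIcc M 1 := fun h => by rw [uIcc_of_le hM] at h; linarith [h.1]
  have hfar := integral_heatKernel_mul_rpow_le_integral_rpow x hα.le ha (sub_pos.2 ht1)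
    hM0.le hM (intervalIntegrable_rpow (Or.inr h0))
  rw [integral_rpow (Or.inr ⟨by linarith, h0⟩), one_rpow,
    show -α - a + 1 = 1 - α - a by ring] at hfar
  have hfar' : (1 - M ^ (1 - α - a)) / (1 - α - a) ≤ M ^ (1 - α - a) / (α + a - 1) := by
    rw [show 1 - α - a = -(α + a - 1) by ring, div_neg, neg_le, ← neg_div, neg_sub,
      div_le_div_iff_of_pos_right (by linarith)]
    linarith
  have hsum : (max 1 ((4 * α) ^ α) / (1 - a) + 1 / (α + a - 1)) * M ^ (1 - α - a) =
      max 1 ((4 * α) ^ α) / (1 - a) * M ^ (1 - α - a) + M ^ (1 - α - a) / (α + a - 1) := by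
    ring
  rw [psiTilde_eq_integral_heatKernel, ← integral_add_adjacent_intervals (b := M)
    (intervalIntegrable_heatKernel_mul_rpow x ha (sub_pos.2 ht1) hM0.le)
    ((intervalIntegrable_heatKernel_mul_rpow x ha (sub_pos.2 ht1) zero_le_one).mono_set
      (by rw [uIcc_of_le hM, uIcc_of_le zero_le_one]; exact Icc_subset_Icc hM0.le le_rfl))]
  linarith

end psiTilde

theorem stmt_11_general (a α : ℝ) (ha0 : 0 < a) (ha1 : a < 1) (hα : 0 < α)
    (hne : α + a ≠ 1) :
    ∃ c : ℝ, 1 < c ∧ ∀ t xn : ℝ, 1 < t → t < 5/4 → 0 < xn → xn < 1/2 →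
      (α + a > 1 →
        c⁻¹ * (max (t - 1) (xn ^ 2)) ^ (1 - α - a) ≤
          (∫ s in (0:ℝ)..1,
            (t - s) ^ (-α) * Real.exp (-xn ^ 2 / (4 * (t - s))) * (1 - s) ^ (-a)) ∧
        (∫ s in (0:ℝ)..1,
            (t - s) ^ (-α) * Real.exp (-xn ^ 2 / (4 * (t - s))) * (1 - s) ^ (-a)) ≤
          c * (max (t - 1) (xn ^ 2)) ^ (1 - α - a)) ∧
      (α + a < 1 →
        c⁻¹ ≤ (∫ s in (0:ℝ)..1,
            (t - s) ^ (-α) * Real.exp (-xn ^ 2 / (4 * (t - s))) * (1 - s) ^ (-a)) ∧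
        (∫ s in (0:ℝ)..1,
            (t - s) ^ (-α) * Real.exp (-xn ^ 2 / (4 * (t - s))) * (1 - s) ^ (-a)) ≤ c) := by
  rcases hne.lt_or_gt with hlt | hgt
  · obtain ⟨c, hc1, hcL, hcU⟩ := exists_one_lt_inv_le_and_le
      (L := 1 / 2 * ((5 / 4) ^ (-α) * exp (-(1 / 4)))) (by positivity) (1 / (1 - α - a))
    refine ⟨c, hc1, fun t xn ht1 ht2 hx0 hx2 =>
      ⟨fun h => absurd h hlt.not_gt, fun _ => ⟨?_, ?_⟩⟩⟩
    · exact hcL.trans (const_le_psiTilde xn hα.le ha0.le ha1 ht1 ht2.le (by nlinarith))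
    · exact (psiTilde_le_of_add_lt_one xn hα.le hlt ht1).trans hcU
  · obtain ⟨c, hc1, hcL, hcU⟩ := exists_one_lt_inv_le_and_le
      (L := 3 ^ (-α) * 2 ^ (-a) * exp (-(1 / 4))) (by positivity)
      (max 1 ((4 * α) ^ α) / (1 - a) + 1 / (α + a - 1))
    refine ⟨c, hc1, fun t xn ht1 ht2 hx0 hx2 => ?_⟩
    have hM : max (t - 1) (xn ^ 2) ≤ 1 / 2 := max_le (by linarith) (by nlinarith)
    have hX : 0 ≤ max (t - 1) (xn ^ 2) ^ (1 - α - a) :=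
      rpow_nonneg (le_max_of_le_left (by linarith)) _
    refine ⟨fun _ => ⟨?_, ?_⟩, fun h => absurd h hgt.not_gt⟩
    · exact (mul_le_mul_of_nonneg_right hcL hX).trans
        (rpow_le_psiTilde xn hα.le ha0.le ha1 ht1 hM)
    · exact (psiTilde_le_rpow_of_one_lt_add xn hα ha1 hgt ht1 (by linarith)).trans
        (mul_le_mul_of_nonneg_right hcU hX)

theorem stmt_11 (a α : ℝ) (ha0 : 0 < a) (ha1 : a < 1) (hα : 0 < α)
    (hα1 : α ≠ 1) (hne : α + a ≠ 1) :
    ∃ c : ℝ, 1 < c ∧ ∀ t xn : ℝ, 1 < t → t < 5/4 → 0 < xn → xn < 1/2 →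
      (α + a > 1 →
        c⁻¹ * (max (t - 1) (xn ^ 2)) ^ (1 - α - a) ≤
          (∫ s in (0:ℝ)..1,
            (t - s) ^ (-α) * Real.exp (-xn ^ 2 / (4 * (t - s))) * (1 - s) ^ (-a)) ∧
        (∫ s in (0:ℝ)..1,
            (t - s) ^ (-α) * Real.exp (-xn ^ 2 / (4 * (t - s))) * (1 - s) ^ (-a)) ≤
          c * (max (t - 1) (xn ^ 2)) ^ (1 - α - a)) ∧
      (α + a < 1 →
        c⁻¹ ≤ (∫ s in (0:ℝ)..1,
            (t - s) ^ (-α) * Real.exp (-xn ^ 2 / (4 * (t - s))) * (1 - s) ^ (-a)) ∧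
        (∫ s in (0:ℝ)..1,
            (t - s) ^ (-α) * Real.exp (-xn ^ 2 / (4 * (t - s))) * (1 - s) ^ (-a)) ≤ c) :=
  stmt_11_general a α ha0 ha1 hα hne
end

section
/- Let 0 < a < 1 and m ∈ ℕ with m > a. There exists a constant c > 0 depending only on a, m, such that for all x_n > 0 and all 0 < t-1 < x_n² < 1/2, the integral ∫_{t-1}^{x_n²} s^{-α} exp(-x_n²/(4s)) s^{-a} ds ≤ c x_n^{-2α-2a+2} for every α > 0 with α + a - 1 < m. -/
open Real intervalIntegral

theorem stmt_12 (a : ℝ) (ha0 : 0 < a) (ha1 : a < 1) (m : ℕ) (hm : a < (m : ℝ)) :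
    ∃ c : ℝ, 0 < c ∧ ∀ xn t α : ℝ, 0 < xn → 0 < t - 1 → t - 1 < xn ^ 2 →
      xn ^ 2 < 1/2 → 0 < α → α + a - 1 < (m : ℝ) →
      (∫ s in (t - 1)..(xn ^ 2),
          s ^ (-α) * Real.exp (-xn ^ 2 / (4 * s)) * s ^ (-a)) ≤
        c * xn ^ (-2 * α - 2 * a + 2) := by
  refine ⟨(Nat.factorial (m+1) : ℝ) * 4 ^ (m+1), by positivity, ?_⟩
  intro xn t α hxn ht1 ht2 hx2 hα hαm
  set C : ℝ := (Nat.factorial (m+1) : ℝ) * 4 ^ (m+1) with hCdef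
  have hC : 0 < C := by positivity
  set p : ℝ := (m:ℝ) + 1 - α - a with hpdef
  have hp : 0 < p := by simp only [hpdef]; linarith
  have hle : t - 1 ≤ xn ^ 2 := le_of_lt ht2
  have hx2pos : (0:ℝ) < xn ^ 2 := by positivity
  -- pointwise bound
  have key : ∀ s ∈ Set.Icc (t-1) (xn^2),
      s ^ (-α) * Real.exp (-xn ^ 2 / (4 * s)) * s ^ (-a)
        ≤ C * xn ^ (-2*((m:ℝ)+1)) * s ^ p := by
    intro s hs
    have hs0 : 0 < s := lt_of_lt_of_le ht1 hs.1
    have hexp : Real.exp (-xn ^ 2 / (4 * s))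
        ≤ (Nat.factorial (m+1) : ℝ) * (4*s/xn^2)^(m+1) := by
      have h := Real.pow_div_factorial_le_exp (x := xn^2/(4*s)) (by positivity) (m+1)
      calc Real.exp (-xn ^ 2 / (4 * s)) = (Real.exp (xn^2/(4*s)))⁻¹ := by
            rw [← Real.exp_neg, neg_div]
        _ ≤ (((xn^2/(4*s))^(m+1))/(Nat.factorial (m+1) : ℝ))⁻¹ := by
            apply inv_anti₀ (by positivity) h
        _ = (Nat.factorial (m+1) : ℝ) * (4*s/xn^2)^(m+1) := by
            rw [inv_div, div_eq_mul_inv, ← inv_pow, inv_div]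
    have e1 : s ^ (-α) * ((Nat.factorial (m+1) : ℝ) * (4*s/xn^2)^(m+1)) * s ^ (-a)
        = C * xn ^ (-2*((m:ℝ)+1)) * s ^ p := by
      have h1 : s^(m+1) = s^(((m:ℝ)+1)) := by
        rw [← Real.rpow_natCast s (m+1)]; push_cast; ring_nf
      have h2 : ((xn^2:ℝ))^(m+1) = xn ^ ((2*((m:ℝ)+1))) := by
        rw [← pow_mul, ← Real.rpow_natCast xn (2*(m+1))]; push_cast; ring_nf
      have h3 : xn ^ (-2*((m:ℝ)+1)) = (xn ^ ((2*((m:ℝ)+1))))⁻¹ := by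
        rw [show (-2*((m:ℝ)+1)) = -(2*((m:ℝ)+1)) by ring, Real.rpow_neg hxn.le]
      have h4 : s ^ (-α) * s ^ (((m:ℝ)+1)) * s ^ (-a) = s ^ p := by
        rw [← Real.rpow_add hs0, ← Real.rpow_add hs0]
        congr 1; simp only [hpdef]; ring
      have hX : (0:ℝ) < xn ^ ((2*((m:ℝ)+1))) := Real.rpow_pos_of_pos hxn _
      rw [div_pow, mul_pow, h1, h2, h3, hCdef]
      field_simp
      nlinarith [h4, hX, Real.rpow_pos_of_pos hs0 p]
    calc s ^ (-α) * Real.exp (-xn ^ 2 / (4 * s)) * s ^ (-a)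
        ≤ s ^ (-α) * ((Nat.factorial (m+1) : ℝ) * (4*s/xn^2)^(m+1)) * s ^ (-a) := by
          apply mul_le_mul_of_nonneg_right _ (Real.rpow_nonneg hs0.le _)
          exact mul_le_mul_of_nonneg_left hexp (Real.rpow_nonneg hs0.le _)
      _ = C * xn ^ (-2*((m:ℝ)+1)) * s ^ p := e1
  -- integrability
  have hcont : ∀ s ∈ Set.uIcc (t-1) (xn^2), (0:ℝ) < s := by
    intro s hs
    rw [Set.uIcc_of_le hle] at hs
    exact lt_of_lt_of_le ht1 hs.1
  have hif : IntervalIntegrable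
      (fun s => s ^ (-α) * Real.exp (-xn ^ 2 / (4 * s)) * s ^ (-a))
      MeasureTheory.volume (t-1) (xn^2) := by
    apply ContinuousOn.intervalIntegrable
    apply ContinuousOn.mul
    apply ContinuousOn.mul
    · exact ContinuousOn.rpow_const continuousOn_id
        (fun x hx => Or.inl (ne_of_gt (hcont x hx)))
    · exact Real.continuous_exp.comp_continuousOn
        (ContinuousOn.div continuousOn_const
          (continuousOn_const.mul continuousOn_id)
          (fun x hx => by
            have := hcont x hx
            positivity))
    · exact ContinuousOn.rpow_const continuousOn_id
        (fun x hx => Or.inl (ne_of_gt (hcont x hx)))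
  have hig : IntervalIntegrable
      (fun s => C * xn ^ (-2*((m:ℝ)+1)) * s ^ p)
      MeasureTheory.volume (t-1) (xn^2) := by
    apply ContinuousOn.intervalIntegrable
    exact ContinuousOn.mul continuousOn_const
      (ContinuousOn.rpow_const continuousOn_id
        (fun x hx => Or.inl (ne_of_gt (hcont x hx))))
  have hmono := intervalIntegral.integral_mono_on hle hif hig key
  have hgval : (∫ s in (t-1)..(xn^2), C * xn ^ (-2*((m:ℝ)+1)) * s ^ p)
      = C * xn ^ (-2*((m:ℝ)+1)) *
        (((xn^2) ^ (p+1) - (t-1) ^ (p+1)) / (p+1)) := by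
    rw [intervalIntegral.integral_const_mul, integral_rpow (Or.inl (by linarith))]
  have hnum0 : (0:ℝ) ≤ (xn^2) ^ (p+1) - (t-1) ^ (p+1) :=
    sub_nonneg.2 (Real.rpow_le_rpow ht1.le hle (by linarith))
  have hintb : ((xn^2) ^ (p+1) - (t-1) ^ (p+1)) / (p+1) ≤ (xn^2) ^ (p+1) := by
    calc ((xn^2) ^ (p+1) - (t-1) ^ (p+1)) / (p+1)
        ≤ (xn^2) ^ (p+1) - (t-1) ^ (p+1) := div_le_self hnum0 (by linarith)
      _ ≤ (xn^2) ^ (p+1) := by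
          have := Real.rpow_nonneg ht1.le (p+1); linarith
  have hxeq : xn ^ (-2*((m:ℝ)+1)) * (xn^2 : ℝ) ^ (p+1) = xn ^ (-2*α - 2*a + 2) := by
    rw [← Real.rpow_natCast xn 2, ← Real.rpow_mul hxn.le, ← Real.rpow_add hxn]
    congr 1
    push_cast
    simp only [hpdef]
    ring
  calc (∫ s in (t - 1)..(xn ^ 2),
          s ^ (-α) * Real.exp (-xn ^ 2 / (4 * s)) * s ^ (-a))
      ≤ ∫ s in (t-1)..(xn^2), C * xn ^ (-2*((m:ℝ)+1)) * s ^ p := hmono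
    _ = C * xn ^ (-2*((m:ℝ)+1)) *
        (((xn^2) ^ (p+1) - (t-1) ^ (p+1)) / (p+1)) := hgval
    _ ≤ C * xn ^ (-2*((m:ℝ)+1)) * (xn^2) ^ (p+1) := by
        apply mul_le_mul_of_nonneg_left hintb
        positivity
    _ = C * xn ^ (-2*α - 2*a + 2) := by rw [mul_assoc, hxeq]
end

section
/- Let 0 < a < 1 and α > 1. For 3/4 < t < 1 and 0 < x_n with x_n² < 1-t, define I₂ = ∫_0^{1-t} s^{-α} exp(-x_n²/(4s)) ds. Then there exists c > 1 depending only on α such that c^{-1} x_n^{2-2α} ≤ I₂ ≤ c x_n^{2-2α}. -/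
/-!
Split the integral at `s = X := x_n²`. Below `X` the integrand is at most a constant times
`X^{-α}`, because `u^α e^{-u}` is bounded on `u ≥ 0`; above `X` it is at most `s^{-α}`, whose
integral over `[X, ∞)` is `X^{1-α}/(α-1)` when `α > 1`. For the lower bound, on `[X/2, X]` the
integrand is at least `e^{-1/2} X^{-α}`. Finally `X^{1-α} = x_n^{2-2α}`.
-/

open Real intervalIntegral
open MeasureTheory

lemma Real.rpow_le_rpow_mul_exp {α u : ℝ} (hα : 0 < α) (hu : 0 ≤ u) :
    u ^ α ≤ α ^ α * exp u := by
  have hle : u / α ≤ exp (u / α) := by linarith [add_one_le_exp (u / α)]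
  have h := rpow_le_rpow (by positivity) hle hα.le
  rw [div_rpow hu hα.le, ← exp_mul, div_mul_cancel₀ u hα.ne',
    div_le_iff₀ (by positivity)] at h
  linarith

section HeatKernelIntegral

variable {α X : ℝ}

lemma rpow_neg_mul_exp_le (hα : 0 < α) (hX : 0 < X) {s : ℝ} (hs : 0 < s) :
    s ^ (-α) * exp (-X / (4 * s)) ≤ (4 * α) ^ α * X ^ (-α) := by
  set u := X / (4 * s) with hu
  have hs_eq : s ^ (-α) = (4 / X) ^ α * u ^ α := by
    rw [← mul_rpow (by positivity) (by positivity), rpow_neg hs.le, ← inv_rpow hs.le, hu]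
    congr 1
    field_simp
  have hbound := Real.rpow_le_rpow_mul_exp hα (by positivity : 0 ≤ u)
  have hexp : exp u * exp (-X / (4 * s)) = 1 := by
    rw [← exp_add, neg_div, add_neg_cancel, exp_zero]
  calc s ^ (-α) * exp (-X / (4 * s))
      = (4 / X) ^ α * (u ^ α * exp (-X / (4 * s))) := by rw [hs_eq, mul_assoc]
    _ ≤ (4 / X) ^ α * (α ^ α * exp u * exp (-X / (4 * s))) := by gcongr
    _ = (4 * α) ^ α * X ^ (-α) := by
      rw [mul_assoc _ (exp u), hexp, mul_one, div_rpow (by norm_num) hX.le,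
        mul_rpow (by norm_num) hα.le, rpow_neg hX.le]
      ring

lemma rpow_neg_mul_exp_le_rpow_neg (hX : 0 ≤ X) {s : ℝ} (hs : 0 < s) :
    s ^ (-α) * exp (-X / (4 * s)) ≤ s ^ (-α) := by
  refine mul_le_of_le_one_right (rpow_nonneg hs.le _) (exp_le_one_iff.2 ?_)
  rw [neg_div]
  exact neg_nonpos.2 (by positivity)

lemma intervalIntegrable_rpow_neg_mul_exp (hα : 0 < α) (hX : 0 < X) {a b : ℝ}
    (ha : 0 ≤ a) (hb : 0 ≤ b) :
    IntervalIntegrable (fun s => s ^ (-α) * exp (-X / (4 * s))) volume a b := by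
  rw [intervalIntegrable_iff]
  refine Measure.integrableOn_of_bounded (M := (4 * α) ^ α * X ^ (-α)) measure_Ioc_lt_top.ne
    (by fun_prop : Measurable fun s : ℝ => s ^ (-α) * exp (-X / (4 * s))).aestronglyMeasurable ?_
  filter_upwards [ae_restrict_mem measurableSet_uIoc] with s hs
  have hs0 : 0 < s := lt_of_le_of_lt (le_min ha hb) hs.1
  rw [Real.norm_of_nonneg (by positivity)]
  exact rpow_neg_mul_exp_le hα hX hs0

lemma integral_rpow_neg_le (hα : 1 < α) (hX : 0 < X) {T : ℝ} (hXT : X ≤ T) :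
    ∫ s in X..T, s ^ (-α) ≤ X ^ (1 - α) / (α - 1) := by
  have h0 : (0 : ℝ) ∉ Set.uIcc X T := Set.notMem_uIcc_of_lt hX (hX.trans_le hXT)
  rw [integral_rpow (Or.inr ⟨by linarith, h0⟩), neg_add_eq_sub, ← neg_div_neg_eq, neg_sub,
    neg_sub]
  have hT : 0 ≤ T ^ (1 - α) := rpow_nonneg (hX.le.trans hXT) _
  gcongr
  linarith

lemma le_integral_rpow_neg_mul_exp (hα : 0 < α) (hX : 0 < X) {T : ℝ} (hXT : X ≤ T) :
    (2 * exp (1 / 2))⁻¹ * X ^ (1 - α) ≤ ∫ s in 0..T, s ^ (-α) * exp (-X / (4 * s)) := by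
  have hlower : ∀ s ∈ Set.Icc (X / 2) X,
      X ^ (-α) * exp (-(1 / 2)) ≤ s ^ (-α) * exp (-X / (4 * s)) := by
    rintro s ⟨hs_left, hs_right⟩
    have hs : 0 < s := by linarith
    have hexp : exp (-(1 / 2)) ≤ exp (-X / (4 * s)) := by
      rw [exp_le_exp, neg_div, neg_le_neg_iff, div_le_iff₀ (by positivity)]
      linarith
    exact mul_le_mul (rpow_le_rpow_of_nonpos hs hs_right (by linarith)) hexp (exp_nonneg _)
      (rpow_nonneg hs.le _)
  calc (2 * exp (1 / 2))⁻¹ * X ^ (1 - α)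
      = ∫ _ in X / 2..X, X ^ (-α) * exp (-(1 / 2)) := by
        rw [intervalIntegral.integral_const, smul_eq_mul, sub_eq_add_neg 1 α, rpow_add hX,
          rpow_one, exp_neg]
        ring
    _ ≤ ∫ s in X / 2..X, s ^ (-α) * exp (-X / (4 * s)) :=
        integral_mono_on (by linarith) intervalIntegrable_const
          (intervalIntegrable_rpow_neg_mul_exp hα hX (by positivity) hX.le) hlower
    _ ≤ ∫ s in 0..T, s ^ (-α) * exp (-X / (4 * s)) := by
        refine integral_mono_interval (by positivity) (by linarith) hXT ?_
          (intervalIntegrable_rpow_neg_mul_exp hα hX le_rfl (hX.le.trans hXT))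
        filter_upwards [ae_restrict_mem measurableSet_Ioc] with s hs
        exact mul_nonneg (rpow_nonneg hs.1.le _) (exp_nonneg _)

lemma integral_rpow_neg_mul_exp_le (hα : 1 < α) (hX : 0 < X) {T : ℝ} (hXT : X ≤ T) :
    ∫ s in 0..T, s ^ (-α) * exp (-X / (4 * s)) ≤
      ((4 * α) ^ α + (α - 1)⁻¹) * X ^ (1 - α) := by
  have hα0 : 0 < α := by linarith
  have hnear : ∫ s in 0..X, s ^ (-α) * exp (-X / (4 * s)) ≤ (4 * α) ^ α * X ^ (1 - α) := by
    calc ∫ s in 0..X, s ^ (-α) * exp (-X / (4 * s))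
        ≤ ∫ _ in 0..X, (4 * α) ^ α * X ^ (-α) := by
          refine integral_mono_on hX.le (intervalIntegrable_rpow_neg_mul_exp hα0 hX le_rfl hX.le)
            intervalIntegrable_const fun s hs => ?_
          rcases hs.1.eq_or_lt with rfl | hs0
          · rw [zero_rpow (by linarith), zero_mul]
            positivity
          · exact rpow_neg_mul_exp_le hα0 hX hs0
      _ = (4 * α) ^ α * X ^ (1 - α) := by
          rw [intervalIntegral.integral_const, smul_eq_mul, sub_eq_add_neg 1 α, rpow_add hX,
            rpow_one]
          ring
  have hfar : ∫ s in X..T, s ^ (-α) * exp (-X / (4 * s)) ≤ X ^ (1 - α) / (α - 1) := by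
    refine le_trans (integral_mono_on hXT
      (intervalIntegrable_rpow_neg_mul_exp hα0 hX hX.le (hX.le.trans hXT))
      (intervalIntegrable_rpow (Or.inr (Set.notMem_uIcc_of_lt hX (hX.trans_le hXT))))
      fun s hs => ?_) (integral_rpow_neg_le hα hX hXT)
    exact rpow_neg_mul_exp_le_rpow_neg hX.le (hX.trans_le hs.1)
  rw [← integral_add_adjacent_intervals
    (intervalIntegrable_rpow_neg_mul_exp hα0 hX le_rfl hX.le)
    (intervalIntegrable_rpow_neg_mul_exp hα0 hX hX.le (hX.le.trans hXT))]
  calc _ ≤ (4 * α) ^ α * X ^ (1 - α) + X ^ (1 - α) / (α - 1) := add_le_add hnear hfar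
    _ = ((4 * α) ^ α + (α - 1)⁻¹) * X ^ (1 - α) := by ring

end HeatKernelIntegral

theorem stmt_13_general (α : ℝ) (hα : 1 < α) :
    ∃ c : ℝ, 1 < c ∧ ∀ t xn : ℝ, 3/4 < t → t < 1 → 0 < xn → xn ^ 2 < 1 - t →
      c⁻¹ * xn ^ (2 - 2 * α) ≤
        (∫ s in (0:ℝ)..(1 - t), s ^ (-α) * Real.exp (-xn ^ 2 / (4 * s))) ∧
      (∫ s in (0:ℝ)..(1 - t), s ^ (-α) * Real.exp (-xn ^ 2 / (4 * s))) ≤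
        c * xn ^ (2 - 2 * α) := by
  have hexp : 1 ≤ exp (1 / 2) := one_le_exp (by norm_num)
  have hrest : 0 < (4 * α) ^ α + (α - 1)⁻¹ := by
    have : 0 < α - 1 := by linarith
    positivity
  refine ⟨2 * exp (1 / 2) + ((4 * α) ^ α + (α - 1)⁻¹), by linarith, ?_⟩
  intro t xn _ _ hxn hxT
  have hX : 0 < xn ^ 2 := by positivity
  have hpow : xn ^ (2 - 2 * α) = (xn ^ 2) ^ (1 - α) := by
    rw [← rpow_natCast_mul hxn.le]
    push_cast
    ring_nf
  have hpos : 0 < xn ^ (2 - 2 * α) := rpow_pos_of_pos hxn _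
  constructor
  · refine le_trans ?_ (hpow ▸ le_integral_rpow_neg_mul_exp (by linarith) hX hxT.le)
    exact mul_le_mul_of_nonneg_right (inv_anti₀ (by positivity) (by linarith)) hpos.le
  · refine (integral_rpow_neg_mul_exp_le hα hX hxT.le).trans ?_
    rw [← hpow]
    exact mul_le_mul_of_nonneg_right (by linarith) hpos.le

theorem stmt_13 (a α : ℝ) (ha0 : 0 < a) (ha1 : a < 1) (hα : 1 < α) :
    ∃ c : ℝ, 1 < c ∧ ∀ t xn : ℝ, 3/4 < t → t < 1 → 0 < xn → xn ^ 2 < 1 - t →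
      c⁻¹ * xn ^ (2 - 2 * α) ≤
        (∫ s in (0:ℝ)..(1 - t), s ^ (-α) * Real.exp (-xn ^ 2 / (4 * s))) ∧
      (∫ s in (0:ℝ)..(1 - t), s ^ (-α) * Real.exp (-xn ^ 2 / (4 * s))) ≤
        c * xn ^ (2 - 2 * α) :=
  stmt_13_general α hα
end
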